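/- The second derivative of E(s, φ) = (cos 2φ − s cos 2φ)·erf(1/√(2s)) + √(2s/π)·cos(2φ)·e^{−1/(2s)} + sin²φ with respect to s satisfies ∂²E/∂s² = (e^{−1/(2s)}/√(2π s⁵))·cos(2φ) for s > 0. -/

import Mathlib

open Real

noncomputable def erf (t : ℝ) : ℝ :=
  (2 / Real.sqrt π) * ∫ u in (0:ℝ)..t, Real.exp (-(u ^ 2))

noncomputable def Egain (s φ : ℝ) : ℝ :=
  (cos (2 * φ) - s * cos (2 * φ)) * erf (1 / Real.sqrt (2 * s))
    + Real.sqrt (2 * s / π) * cos (2 * φ) * Real.exp (-(1 / (2 * s)))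
    + sin φ ^ 2

/-!
With `p s = exp (-1/(2s)) / √(2πs)`, for `s > 0` one has `E = cos 2φ · F s + sin² φ` where
`F s = (1 - s) · erf (1/√(2s)) + 2s · p s`. Since `d/ds erf (1/√(2s)) = -p s / s` and
`p' = p (1 - s) / (2s²)`, the terms of `F'` carrying `1 - s` cancel, leaving
`F' = 2p - erf (1/√(2s))`, and then `F'' = 2p' + p / s = p / s² = exp (-1/(2s)) / √(2πs⁵)`.
-/

theorem hasDerivAt_erf (t : ℝ) : HasDerivAt erf (2 / √π * exp (-(t ^ 2))) t := by
  have hc : Continuous fun u : ℝ => exp (-(u ^ 2)) := by fun_prop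
  exact (intervalIntegral.integral_hasDerivAt_right (hc.intervalIntegrable 0 t)
    hc.aestronglyMeasurable.stronglyMeasurableAtFilter hc.continuousAt).const_mul _

/-- The centred normal density with variance `s`, evaluated at `1`. -/
noncomputable def normalDensityAtOne (s : ℝ) : ℝ :=
  exp (-(1 / (2 * s))) / √(2 * π * s)

theorem hasDerivAt_exp_neg_one_div_two_mul {s : ℝ} (hs : 0 < s) :
    HasDerivAt (fun x => exp (-(1 / (2 * x)))) (exp (-(1 / (2 * s))) / (2 * s ^ 2)) s := by
  have h2 : HasDerivAt (fun x : ℝ => 2 * x) 2 s := by simpa using (hasDerivAt_id s).const_mul 2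
  convert ((h2.fun_inv (by positivity)).fun_neg).exp using 1
  · simp only [one_div]
  · field_simp

theorem hasDerivAt_normalDensityAtOne {s : ℝ} (hs : 0 < s) :
    HasDerivAt normalDensityAtOne
      (normalDensityAtOne s * (1 - s) / (2 * s ^ 2)) s := by
  have hsqrt : HasDerivAt (fun x => √(2 * π * x)) (2 * π / (2 * √(2 * π * s))) s := by
    simpa using ((hasDerivAt_id s).const_mul (2 * π)).sqrt (by positivity)
  refine ((hasDerivAt_exp_neg_one_div_two_mul hs).fun_div hsqrt (by positivity)).congr_deriv ?_
  rw [normalDensityAtOne]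
  field_simp
  rw [sq_sqrt (by positivity)]
  ring

theorem hasDerivAt_erf_one_div_sqrt_two_mul {s : ℝ} (hs : 0 < s) :
    HasDerivAt (fun x => erf (1 / √(2 * x))) (-(normalDensityAtOne s / s)) s := by
  have hsqrt : HasDerivAt (fun x => √(2 * x)) (2 / (2 * √(2 * s))) s := by
    simpa using ((hasDerivAt_id s).const_mul 2).sqrt (by positivity)
  refine ((hasDerivAt_erf _).comp s
    ((hasDerivAt_const s 1).fun_div hsqrt (by positivity))).congr_deriv ?_
  rw [normalDensityAtOne, show 2 * π * s = π * (2 * s) by ring, sqrt_mul pi_pos.le,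
    div_pow, one_pow, sq_sqrt (by positivity)]
  field_simp
  ring

noncomputable def egainCosCoeff (s : ℝ) : ℝ :=
  (1 - s) * erf (1 / √(2 * s)) + 2 * s * normalDensityAtOne s

theorem Egain_eq_egainCosCoeff (φ : ℝ) {s : ℝ} (hs : 0 < s) :
    Egain s φ = cos (2 * φ) * egainCosCoeff s + sin φ ^ 2 := by
  have hroot : √(2 * s / π) = 2 * s / √(2 * π * s) := by
    rw [eq_div_iff (by positivity), ← sqrt_mul' _ (by positivity),
      show 2 * s / π * (2 * π * s) = (2 * s) ^ 2 by field_simp, sqrt_sq (by positivity)]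
  rw [Egain, egainCosCoeff, normalDensityAtOne, hroot]
  ring

theorem hasDerivAt_egainCosCoeff {s : ℝ} (hs : 0 < s) :
    HasDerivAt egainCosCoeff (2 * normalDensityAtOne s - erf (1 / √(2 * s))) s := by
  have hlin : HasDerivAt (fun x : ℝ => 1 - x) (-1) s := by
    simpa using (hasDerivAt_id s).const_sub 1
  have h2x : HasDerivAt (fun x : ℝ => 2 * x) 2 s := by
    simpa using (hasDerivAt_id s).const_mul 2
  refine ((hlin.mul (hasDerivAt_erf_one_div_sqrt_two_mul hs)).add
    (h2x.mul (hasDerivAt_normalDensityAtOne hs))).congr_deriv ?_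
  field_simp
  ring

theorem hasDerivAt_two_mul_normalDensityAtOne_sub_erf {s : ℝ} (hs : 0 < s) :
    HasDerivAt (fun x => 2 * normalDensityAtOne x - erf (1 / √(2 * x)))
      (normalDensityAtOne s / s ^ 2) s := by
  refine (((hasDerivAt_normalDensityAtOne hs).const_mul 2).sub
    (hasDerivAt_erf_one_div_sqrt_two_mul hs)).congr_deriv ?_
  field_simp
  ring

theorem normalDensityAtOne_div_sq {s : ℝ} (hs : 0 < s) :
    normalDensityAtOne s / s ^ 2 = exp (-(1 / (2 * s))) / √(2 * π * s ^ 5) := by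
  rw [normalDensityAtOne, show 2 * π * s ^ 5 = 2 * π * s * (s ^ 2) ^ 2 by ring,
    sqrt_mul' (2 * π * s) (by positivity : (0 : ℝ) ≤ (s ^ 2) ^ 2), sqrt_sq (by positivity),
    div_div]

theorem hasDerivAt_Egain (φ : ℝ) {s : ℝ} (hs : 0 < s) :
    HasDerivAt (fun x => Egain x φ)
      (cos (2 * φ) * (2 * normalDensityAtOne s - erf (1 / √(2 * s)))) s := by
  have hEgain : (fun x => Egain x φ) =ᶠ[nhds s]
      fun x => cos (2 * φ) * egainCosCoeff x + sin φ ^ 2 :=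
    (lt_mem_nhds hs).mono fun x hx => Egain_eq_egainCosCoeff φ hx
  exact (((hasDerivAt_egainCosCoeff hs).const_mul _).add_const _).congr_of_eventuallyEq hEgain

theorem Egain_second_deriv (φ : ℝ) :
    ∀ s : ℝ, 0 < s →
      deriv (deriv (fun s => Egain s φ)) s
        = Real.exp (-(1 / (2 * s))) / Real.sqrt (2 * π * s ^ 5) * cos (2 * φ) := by
  intro s hs
  have hderiv : deriv (fun x => Egain x φ) =ᶠ[nhds s]
      fun x => cos (2 * φ) * (2 * normalDensityAtOne x - erf (1 / √(2 * x))) := by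
    filter_upwards [lt_mem_nhds hs] with x hx using (hasDerivAt_Egain φ hx).deriv
  rw [hderiv.deriv_eq, ((hasDerivAt_two_mul_normalDensityAtOne_sub_erf hs).const_mul _).deriv,
    normalDensityAtOne_div_sq hs, mul_comm]
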